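/- Let M be a matroid, let S, T be disjoint subsets of E(M), and let k := κ_M(S,T). Then there exist subsets S₁ ⊆ S and T₁ ⊆ T such that |S₁| = |T₁| = κ_M(S₁, T₁) = k. -/

import Mathlib

open Set Matroid

namespace Intertwine

variable {α : Type*}

/-- The (extended) rank of a set in a matroid: the supremum of the cardinalities of its
independent subsets. -/
noncomputable def eRk (M : Matroid α) (X : Set α) : ℕ∞ :=
  ⨆ I ∈ {I : Set α | M.Indep I ∧ I ⊆ X}, I.encard

/-- The connectivity function `λ_M(X) = r(X) + r(E \ X) - r(M)`. -/
noncomputable def lam (M : Matroid α) (X : Set α) : ℕ∞ :=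
  eRk M X + eRk M (M.E \ X) - eRk M M.E

/-- The connectivity between `S` and `T`:
`κ_M(S,T) = min {λ_M(X) : S ⊆ X ⊆ E \ T}`. -/
noncomputable def kap (M : Matroid α) (S T : Set α) : ℕ∞ :=
  ⨅ X ∈ {X : Set α | S ⊆ X ∧ X ⊆ M.E \ T}, lam M X

/-- Deletion of a set of elements. -/
def del (M : Matroid α) (D : Set α) : Matroid α := M ↾ (M.E \ D)

/-- Contraction of a set of elements, via duality: `M / C = (M* \ C)*`. -/
def con (M : Matroid α) (C : Set α) : Matroid α := (del M✶ C)✶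

/-- `N` is a minor of `M` if `N = M / C \ D` for disjoint subsets `C, D` of `E(M)`. -/
def IsMinor (N M : Matroid α) : Prop :=
  ∃ C D : Set α, C ⊆ M.E ∧ D ⊆ M.E ∧ Disjoint C D ∧ N = del (con M C) D

/-- `M` is representable over the field `𝔽` if its independent sets are exactly the
sets on which some vector-valued function is linearly independent. -/
def IsRepresentable (𝔽 : Type*) [Field 𝔽] (M : Matroid α) : Prop :=
  ∃ (B : Set α) (v : α → (B →₀ 𝔽)),
    ∀ I : Set α, M.Indep I ↔ I ⊆ M.E ∧ LinearIndependent 𝔽 (fun x : I ↦ v x)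

end Intertwine

/-!
A basis `I` of `S` spans `S`, so `κ(I, T) = κ(S, T)` and `S` may be taken finite. If
`k = κ(S, T) < |S|`, some `s ∈ S` can be dropped without lowering `κ`: `κ` inherits
submodularity in its first argument from `λ`, so if every element of a `(k + 1)`-subset `G ⊆ S`
were essential, each would lower `κ(S \ G, T)` by one more and it would become negative.
Hence an inclusion-minimal `S₁ ⊆ I` with `κ(S₁, T) = k` has exactly `k` elements; since `κ` is
symmetric, the same argument applied to `T` and `S₁` gives `T₁`. In infinite rank, truncated
subtraction in `ℕ∞` makes `λ` identically `0`, so `k = 0` and the empty sets work.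
-/

namespace Intertwine

variable {α : Type*} {M : Matroid α} {S T X A B G : Set α}

lemma eRk_eq_matroid_eRk (M : Matroid α) (X : Set α) : eRk M X = M.eRk X := by
  refine le_antisymm (iSup₂_le fun I hI ↦ hI.1.encard_le_eRk_of_subset hI.2) ?_
  obtain ⟨I, hI⟩ := M.exists_isBasis' X
  rw [hI.eRk_eq_encard]
  exact le_iSup₂ (f := fun I (_ : I ∈ {I | M.Indep I ∧ I ⊆ X}) ↦ I.encard) I ⟨hI.indep, hI.subset⟩

lemma lam_eq_eRk (M : Matroid α) (X : Set α) :
    lam M X = M.eRk X + M.eRk (M.E \ X) - M.eRank := by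
  simp only [lam, eRk_eq_matroid_eRk, eRk_ground]

lemma eRank_le_eRk_add_eRk_compl (M : Matroid α) (X : Set α) :
    M.eRank ≤ M.eRk X + M.eRk (M.E \ X) := by
  rw [← M.eRk_union_ground X, ← union_sdiff_self]
  exact M.eRk_union_le_eRk_add_eRk X (M.E \ X)

lemma lam_add_eRank (M : Matroid α) (X : Set α) :
    lam M X + M.eRank = M.eRk X + M.eRk (M.E \ X) := by
  rw [lam_eq_eRk, tsub_add_cancel_of_le (eRank_le_eRk_add_eRk_compl M X)]

lemma lam_le_eRk (M : Matroid α) (X : Set α) : lam M X ≤ M.eRk X := by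
  rw [lam_eq_eRk, tsub_le_iff_right]
  exact add_le_add le_rfl (M.eRk_le_eRank _)

lemma lam_compl (M : Matroid α) (X : Set α) : lam M (M.E \ X) = lam M X := by
  rw [lam_eq_eRk, lam_eq_eRk, sdiff_sdiff_right_self, eRk_ground_inter, add_comm]

lemma lam_union_le_of_subset_closure (h : A ⊆ M.closure X) : lam M (X ∪ A) ≤ lam M X := by
  have hrk : M.eRk (X ∪ A) ≤ M.eRk X := by
    simpa only [eRk_union_closure_right_eq, union_self]
      using M.eRk_mono (union_subset_union_right X h)
  have hrk_compl : M.eRk (M.E \ (X ∪ A)) ≤ M.eRk (M.E \ X) :=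
    M.eRk_mono (sdiff_subset_sdiff_right subset_union_left)
  rw [lam_eq_eRk, lam_eq_eRk]
  exact tsub_le_tsub_right (add_le_add hrk hrk_compl) _

lemma lam_eq_zero [M.RankInfinite] (X : Set α) : lam M X = 0 := by
  rw [lam_eq_eRk, eRank_eq_top]
  exact tsub_eq_zero_of_le le_top

lemma lam_inter_add_lam_union_le [M.RankFinite] (X Y : Set α) :
    lam M (X ∩ Y) + lam M (X ∪ Y) ≤ lam M X + lam M Y := by
  have hr : M.eRank + M.eRank ≠ ⊤ := by
    simpa only [ne_eq, ENat.add_eq_top, or_self] using M.eRank_ne_top_iff.2 ‹_›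
  refine (WithTop.add_le_add_iff_right hr).1 ?_
  calc lam M (X ∩ Y) + lam M (X ∪ Y) + (M.eRank + M.eRank)
      = (M.eRk (X ∩ Y) + M.eRk (X ∪ Y)) + (M.eRk (M.E \ (X ∪ Y)) + M.eRk (M.E \ (X ∩ Y))) := by
        rw [add_add_add_comm (lam M _), lam_add_eRank, lam_add_eRank]; ring
    _ ≤ (M.eRk X + M.eRk Y) + (M.eRk (M.E \ X) + M.eRk (M.E \ Y)) :=
        add_le_add (M.eRk_submod X Y) (M.eRk_compl_union_add_eRk_compl_inter_le X Y)
    _ = lam M X + lam M Y + (M.eRank + M.eRank) := by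
        rw [add_add_add_comm (lam M X), lam_add_eRank, lam_add_eRank]; ring

lemma kap_le_lam (hSX : S ⊆ X) (hXT : X ⊆ M.E \ T) : kap M S T ≤ lam M X :=
  iInf₂_le X ⟨hSX, hXT⟩

lemma le_kap {c : ℕ∞} (h : ∀ X, S ⊆ X → X ⊆ M.E \ T → c ≤ lam M X) : c ≤ kap M S T :=
  le_iInf₂ fun X hX ↦ h X hX.1 hX.2

lemma exists_lam_eq_kap (hS : S ⊆ M.E \ T) :
    ∃ X, S ⊆ X ∧ X ⊆ M.E \ T ∧ lam M X = kap M S T := by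
  have hne : {X | S ⊆ X ∧ X ⊆ M.E \ T}.Nonempty := ⟨S, subset_rfl, hS⟩
  have hmem := csInf_mem (hne.image (lam M))
  rw [sInf_image] at hmem
  obtain ⟨X, ⟨hSX, hXT⟩, hX⟩ := hmem
  exact ⟨X, hSX, hXT, hX⟩

lemma kap_mono_left (h : A ⊆ S) : kap M A T ≤ kap M S T :=
  le_kap fun _ hSX hXT ↦ kap_le_lam (h.trans hSX) hXT

lemma kap_le_encard (hS : S ⊆ M.E \ T) : kap M S T ≤ S.encard :=
  ((kap_le_lam subset_rfl hS).trans (lam_le_eRk M S)).trans (M.eRk_le_encard S)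

lemma kap_ne_top [M.RankFinite] (hS : S ⊆ M.E \ T) : kap M S T ≠ ⊤ :=
  ne_top_of_le_ne_top (M.eRank_ne_top_iff.2 ‹_›)
    (((kap_le_lam subset_rfl hS).trans (lam_le_eRk M S)).trans (M.eRk_le_eRank S))

lemma kap_eq_zero [M.RankInfinite] (hS : S ⊆ M.E \ T) : kap M S T = 0 :=
  nonpos_iff_eq_zero.1 ((kap_le_lam subset_rfl hS).trans_eq (lam_eq_zero S))

lemma kap_comm_le (hT : T ⊆ M.E) : kap M T S ≤ kap M S T :=
  le_kap fun X hSX hXT ↦ lam_compl M X ▸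
    kap_le_lam (subset_sdiff.2 ⟨hT, (subset_sdiff.1 hXT).2.symm⟩) (sdiff_subset_sdiff_right hSX)

lemma kap_comm (hS : S ⊆ M.E) (hT : T ⊆ M.E) : kap M S T = kap M T S :=
  (kap_comm_le hS).antisymm (kap_comm_le hT)

lemma kap_eq_of_subset_closure (hAS : A ⊆ S) (hSA : S ⊆ M.closure A) (hS : S ⊆ M.E \ T) :
    kap M A T = kap M S T := by
  refine (kap_mono_left hAS).antisymm (le_kap fun X hAX hXT ↦ ?_)
  exact (kap_le_lam subset_union_right (union_subset hXT hS)).trans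
    (lam_union_le_of_subset_closure (hSA.trans (M.closure_subset_closure hAX)))

lemma kap_inter_add_kap_union_le [M.RankFinite] (hA : A ⊆ M.E \ T) (hB : B ⊆ M.E \ T) :
    kap M (A ∩ B) T + kap M (A ∪ B) T ≤ kap M A T + kap M B T := by
  obtain ⟨X, hAX, hXT, hX⟩ := exists_lam_eq_kap hA
  obtain ⟨Y, hBY, hYT, hY⟩ := exists_lam_eq_kap hB
  rw [← hX, ← hY]
  calc kap M (A ∩ B) T + kap M (A ∪ B) T ≤ lam M (X ∩ Y) + lam M (X ∪ Y) :=
        add_le_add (kap_le_lam (inter_subset_inter hAX hBY) (inter_subset_left.trans hXT))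
          (kap_le_lam (union_subset_union hAX hBY) (union_subset hXT hYT))
    _ ≤ lam M X + lam M Y := lam_inter_add_lam_union_le X Y

lemma kap_sdiff_add_encard_le [M.RankFinite] (hS : S ⊆ M.E \ T) (hG : G.Finite) (hGS : G ⊆ S)
    (h : ∀ s ∈ G, kap M (S \ {s}) T + 1 ≤ kap M S T) :
    kap M (S \ G) T + G.encard ≤ kap M S T := by
  induction G, hG using Set.Finite.induction_on with
  | empty => simp
  | @insert a G haG hG ih =>
    have hsub (U : Set α) : S \ U ⊆ M.E \ T := sdiff_subset.trans hS
    have hinter : S \ G ∩ (S \ {a}) = S \ insert a G := by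
      rw [sdiff_inter_sdiff, union_singleton]
    have hunion : S \ G ∪ S \ {a} = S := by
      rw [← sdiff_inter, inter_singleton_eq_empty.2 haG, sdiff_empty]
    refine (WithTop.add_le_add_iff_right (kap_ne_top hS)).1 ?_
    calc kap M (S \ insert a G) T + (insert a G).encard + kap M S T
        = (kap M (S \ G ∩ (S \ {a})) T + kap M (S \ G ∪ S \ {a}) T) + (G.encard + 1) := by
          rw [hinter, hunion, encard_insert_of_notMem haG]; ring
      _ ≤ (kap M (S \ G) T + kap M (S \ {a}) T) + (G.encard + 1) :=
          add_le_add (kap_inter_add_kap_union_le (hsub G) (hsub {a})) le_rfl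
      _ = (kap M (S \ G) T + G.encard) + (kap M (S \ {a}) T + 1) := by ring
      _ ≤ kap M S T + kap M S T :=
          add_le_add (ih ((subset_insert a G).trans hGS) fun s hs ↦ h s (mem_insert_of_mem a hs))
            (h a (mem_insert a G))

lemma exists_kap_sdiff_singleton_eq [M.RankFinite] (hS : S ⊆ M.E \ T)
    (hlt : kap M S T < S.encard) : ∃ s ∈ S, kap M (S \ {s}) T = kap M S T := by
  by_contra! hne
  have hk := kap_ne_top hS
  have hdrop (s : α) (hs : s ∈ S) : kap M (S \ {s}) T + 1 ≤ kap M S T :=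
    Order.add_one_le_of_lt ((kap_mono_left sdiff_subset).lt_of_ne (hne s hs))
  obtain ⟨G, hGS, hG⟩ := exists_subset_encard_eq (Order.add_one_le_of_lt hlt)
  have hGfin : G.Finite := by
    rw [← encard_ne_top_iff, hG]
    exact WithTop.add_ne_top.2 ⟨hk, WithTop.one_ne_top⟩
  have hle := kap_sdiff_add_encard_le hS hGfin hGS fun s hs ↦ hdrop s (hGS hs)
  rw [hG] at hle
  exact lt_irrefl _ (((ENat.lt_add_one_iff hk).2 le_rfl).trans_le (le_add_self.trans hle))

lemma exists_subset_encard_eq_kap [M.RankFinite] (hS : S ⊆ M.E \ T) :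
    ∃ S₁ ⊆ S, S₁.encard = kap M S T ∧ kap M S₁ T = kap M S T := by
  obtain ⟨I, hI⟩ := M.exists_isBasis S (hS.trans sdiff_subset)
  have hIS : kap M I T = kap M S T := kap_eq_of_subset_closure hI.subset hI.subset_closure hS
  obtain ⟨S₁, ⟨hS₁I, hS₁k⟩, hmin⟩ :=
    (hI.indep.finite.finite_subsets.subset fun _ hJ ↦ hJ.1).exists_minimal
      (s := {J | J ⊆ I ∧ kap M J T = kap M S T}) ⟨I, Subset.rfl, hIS⟩
  have hS₁S : S₁ ⊆ S := hS₁I.trans hI.subset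
  refine ⟨S₁, hS₁S, le_antisymm ?_ (hS₁k ▸ kap_le_encard (hS₁S.trans hS)), hS₁k⟩
  by_contra! hlt
  rw [← hS₁k] at hlt
  obtain ⟨s, hs, hks⟩ := exists_kap_sdiff_singleton_eq (hS₁S.trans hS) hlt
  exact (hmin ⟨sdiff_subset.trans hS₁I, hks.trans hS₁k⟩ sdiff_subset hs).2 (mem_singleton s)

end Intertwine

open Intertwine in
/-- There exist `S₁ ⊆ S` and `T₁ ⊆ T` with `|S₁| = |T₁| = κ_M(S₁,T₁) = κ_M(S,T)`. -/
theorem exists_small_linked_subsets {α : Type*} (M : Matroid α)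
    (S T : Set α) (hS : S ⊆ M.E) (hT : T ⊆ M.E) (hST : Disjoint S T) :
    ∃ S₁ T₁ : Set α, S₁ ⊆ S ∧ T₁ ⊆ T ∧
      S₁.encard = kap M S T ∧ T₁.encard = kap M S T ∧ kap M S₁ T₁ = kap M S T := by
  have hS' : S ⊆ M.E \ T := subset_sdiff.2 ⟨hS, hST⟩
  obtain hM | hM := M.rankFinite_or_rankInfinite
  · obtain ⟨S₁, hS₁S, hS₁card, hS₁k⟩ := exists_subset_encard_eq_kap hS'
    have hS₁E : S₁ ⊆ M.E := hS₁S.trans hS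
    have hTS₁ : kap M T S₁ = kap M S T := (kap_comm hS₁E hT).symm.trans hS₁k
    obtain ⟨T₁, hT₁T, hT₁card, hT₁k⟩ :=
      exists_subset_encard_eq_kap (subset_sdiff.2 ⟨hT, hST.symm.mono_right hS₁S⟩)
    refine ⟨S₁, T₁, hS₁S, hT₁T, hS₁card, hT₁card.trans hTS₁, ?_⟩
    rw [kap_comm hS₁E (hT₁T.trans hT), hT₁k, hTS₁]
  · refine ⟨∅, ∅, empty_subset S, empty_subset T, ?_, ?_, ?_⟩ <;>
      simp only [encard_empty, kap_eq_zero hS', kap_eq_zero (empty_subset (M.E \ ∅))]
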